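/- Fix a > 0 and define h_1 : ℝ → ℝ by h_1(x) = (6π²/a²) cos(π√10 (3 − x/a)) for x ∈ (5a/2, 3a) and h_1(x) = 0 otherwise, and e_1 : ℝ → ℝ by e_1(x) = cos(4πx/a) − cos(2πx/a). Let K_{h_1}(x) = ∫_x^{3a} h_1(τ) dτ and (M_{h_1} e_1)(x) = ∫_{3a/2}^{7a/2−x} K_{h_1}(x + t − a/2) e_1(t) dt. Then: (i) ∫_{3a/2}^{2a} e_1(x) dx = 0; and (ii) (M_{h_1} e_1)(x) = −e_1(x) for every x ∈ (3a/2, 2a). -/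

import Mathlib

/-!
For `5a/2 ≤ u ≤ 3a` the kernel is `K(u) = (6π²/a²) sin (β (3a - u)) / β` with `β = π√10/a`, so for
`x ∈ (3a/2, 2a)` the operator is a truncated convolution of `sin (β ·)` with the two cosines of
`e₁`, which integrates in closed form. Since `β² - (4π/a)² = -6π²/a²` and
`β² - (2π/a)² = 6π²/a²`, the boundary term at `t = 7a/2 - x` is exactly `-e₁(x)`, while the two
boundary terms at `t = 3a/2`, where the cosines take the values `cos 6π = 1` and `cos 3π = -1`,
cancel.
-/

open MeasureTheory Set
open scoped Real

noncomputable def h1 (a : ℝ) (x : ℝ) : ℝ :=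
  if x ∈ Set.Ioo (5 * a / 2) (3 * a) then
    (6 * π ^ 2 / a ^ 2) * Real.cos (π * Real.sqrt 10 * (3 - x / a))
  else 0

noncomputable def e1 (a : ℝ) (x : ℝ) : ℝ :=
  Real.cos (4 * π * x / a) - Real.cos (2 * π * x / a)

noncomputable def Kh1 (a : ℝ) (x : ℝ) : ℝ := ∫ τ in x..(3 * a), h1 a τ

noncomputable def Mh1e1 (a : ℝ) (x : ℝ) : ℝ :=
  ∫ t in (3 * a / 2)..(7 * a / 2 - x), Kh1 a (x + t - a / 2) * e1 a t

open Real intervalIntegral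

theorem integral_cos_mul {γ : ℝ} (hγ : γ ≠ 0) (u v : ℝ) :
    ∫ t in u..v, cos (γ * t) = (sin (γ * v) - sin (γ * u)) / γ := by
  rw [integral_comp_mul_left (fun t => cos t) hγ, integral_cos, smul_eq_mul, inv_mul_eq_div]

theorem integral_cos_mul_sub {β : ℝ} (hβ : β ≠ 0) (u w : ℝ) :
    ∫ τ in u..w, cos (β * (w - τ)) = sin (β * (w - u)) / β := by
  rw [integral_comp_sub_left (fun y => cos (β * y)), integral_cos_mul hβ, sub_self, mul_zero,
    sin_zero, sub_zero]

theorem hasDerivAt_sin_mul_cos_primitive {β γ : ℝ} (h : β ^ 2 ≠ γ ^ 2) (v t : ℝ) :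
    HasDerivAt
      (fun t => (β * cos (β * (v - t)) * cos (γ * t) - γ * sin (β * (v - t)) * sin (γ * t)) /
        (β ^ 2 - γ ^ 2))
      (sin (β * (v - t)) * cos (γ * t)) t := by
  have hv : HasDerivAt (fun t => β * (v - t)) (β * (0 - 1)) t :=
    ((hasDerivAt_const t v).sub (hasDerivAt_id t)).const_mul β
  have hγ : HasDerivAt (fun t => γ * t) (γ * 1) t := (hasDerivAt_id t).const_mul γ
  refine ((((hv.cos.const_mul β).mul hγ.cos).sub ((hv.sin.const_mul γ).mul hγ.sin)).div_const
    (β ^ 2 - γ ^ 2)).congr_deriv ?_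
  field_simp [sub_ne_zero.mpr h]
  ring

theorem integral_sin_mul_sub_mul_cos {β γ : ℝ} (h : β ^ 2 ≠ γ ^ 2) (u v : ℝ) :
    ∫ t in u..v, sin (β * (v - t)) * cos (γ * t) =
      (β * cos (γ * v) - β * cos (β * (v - u)) * cos (γ * u) +
        γ * sin (β * (v - u)) * sin (γ * u)) / (β ^ 2 - γ ^ 2) := by
  rw [integral_eq_sub_of_hasDerivAt (fun t _ => hasDerivAt_sin_mul_cos_primitive h v t)
    (by apply Continuous.intervalIntegrable; fun_prop)]
  simp only [sub_self, mul_zero, cos_zero, sin_zero, mul_one, zero_mul, sub_zero]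
  ring

theorem e1_eq (a t : ℝ) : e1 a t = cos (4 * π / a * t) - cos (2 * π / a * t) := by
  rw [e1, div_mul_eq_mul_div, div_mul_eq_mul_div]

theorem integral_e1_eq_zero {a : ℝ} (ha : a ≠ 0) : ∫ x in (3 * a / 2)..(2 * a), e1 a x = 0 := by
  simp_rw [e1_eq]
  rw [intervalIntegral.integral_sub (by apply Continuous.intervalIntegrable; fun_prop)
      (by apply Continuous.intervalIntegrable; fun_prop),
    integral_cos_mul (by positivity), integral_cos_mul (by positivity)]
  rw [show 4 * π / a * (2 * a) = (8 : ℕ) * π by field_simp; norm_num,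
    show 4 * π / a * (3 * a / 2) = (6 : ℕ) * π by field_simp; norm_num,
    show 2 * π / a * (2 * a) = (4 : ℕ) * π by field_simp; norm_num,
    show 2 * π / a * (3 * a / 2) = (3 : ℕ) * π by field_simp; norm_num]
  simp only [sin_nat_mul_pi]
  ring

theorem Kh1_eq_of_mem_Icc {a u : ℝ} (ha : 0 < a) (hu : u ∈ Icc (5 * a / 2) (3 * a)) :
    Kh1 a u = 6 * π ^ 2 / a ^ 2 * (sin (π * √10 / a * (3 * a - u)) / (π * √10 / a)) := by
  have hβ : π * √10 / a ≠ 0 := by positivity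
  rw [Kh1, integral_congr_Ioo_of_le
      (g := fun τ => 6 * π ^ 2 / a ^ 2 * cos (π * √10 / a * (3 * a - τ))) hu.2,
    intervalIntegral.integral_const_mul, integral_cos_mul_sub hβ]
  intro τ hτ
  rw [h1, if_pos ⟨hu.1.trans_lt hτ.1, hτ.2⟩]
  congr 2
  field_simp

theorem Mh1e1_eq {a x : ℝ} (ha : 0 < a) (hx : x ∈ Icc (3 * a / 2) (2 * a)) :
    Mh1e1 a x = 6 * π ^ 2 / a ^ 2 / (π * √10 / a) *
      ∫ t in (3 * a / 2)..(7 * a / 2 - x), sin (π * √10 / a * (7 * a / 2 - x - t)) * e1 a t := by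
  rw [Mh1e1, ← intervalIntegral.integral_const_mul]
  refine integral_congr fun t ht => ?_
  rw [uIcc_of_le (by linarith [hx.2])] at ht
  rw [Kh1_eq_of_mem_Icc ha ⟨by linarith [hx.1, ht.1], by linarith [ht.2]⟩,
    show 3 * a - (x + t - a / 2) = 7 * a / 2 - x - t by ring]
  ring

theorem sq_pi_sqrt_ten_div_sub_sq (a n : ℝ) :
    (π * √10 / a) ^ 2 - (n * π / a) ^ 2 = (10 - n ^ 2) * π ^ 2 / a ^ 2 := by
  rw [div_pow, div_pow, mul_pow, mul_pow, sq_sqrt (by norm_num)]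
  ring

theorem Mh1e1_eq_neg_e1 {a x : ℝ} (ha : 0 < a) (hx : x ∈ Icc (3 * a / 2) (2 * a)) :
    Mh1e1 a x = -e1 a x := by
  have ha' : a ≠ 0 := ha.ne'
  have hne (n : ℝ) (hn : n ^ 2 ≠ 10) : (π * √10 / a) ^ 2 ≠ (n * π / a) ^ 2 := by
    rw [Ne, ← sub_eq_zero, sq_pi_sqrt_ten_div_sub_sq]
    exact div_ne_zero (mul_ne_zero (sub_ne_zero.mpr hn.symm) (by positivity)) (by positivity)
  simp_rw [Mh1e1_eq ha hx, e1_eq, mul_sub (sin _)]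
  rw [intervalIntegral.integral_sub (by apply Continuous.intervalIntegrable; fun_prop)
      (by apply Continuous.intervalIntegrable; fun_prop),
    integral_sin_mul_sub_mul_cos (hne 4 (by norm_num)),
    integral_sin_mul_sub_mul_cos (hne 2 (by norm_num)),
    show 4 * π / a * (7 * a / 2 - x) = (7 : ℕ) * (2 * π) - 4 * π / a * x by field_simp; ring,
    show 2 * π / a * (7 * a / 2 - x) = (7 : ℕ) * π - 2 * π / a * x by field_simp; ring,
    show 4 * π / a * (3 * a / 2) = (6 : ℕ) * π by field_simp; ring,
    show 2 * π / a * (3 * a / 2) = (3 : ℕ) * π by field_simp; ring,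
    cos_nat_mul_two_pi_sub, cos_nat_mul_pi_sub, cos_nat_mul_pi, cos_nat_mul_pi, sin_nat_mul_pi,
    sin_nat_mul_pi]
  rw [sq_pi_sqrt_ten_div_sub_sq, sq_pi_sqrt_ten_div_sub_sq]
  field_simp
  ring

theorem statement19 (a : ℝ) (ha : 0 < a) :
    (∫ x in (3 * a / 2)..(2 * a), e1 a x) = 0 ∧
    ∀ x ∈ Set.Ioo (3 * a / 2) (2 * a), Mh1e1 a x = -e1 a x :=
  ⟨integral_e1_eq_zero ha.ne', fun _ hx => Mh1e1_eq_neg_e1 ha (Ioo_subset_Icc_self hx)⟩
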